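/- If M is a finitely generated, Artinian, graded A-module, then there exists N ∈ ℕ such that dim_ℂ M_n ≤ N for all n ∈ ℤ. -/

import Mathlib

noncomputable section

/-- A realization of the generalized Weyl algebra `T(R,σ,v)`:
a `ℤ`-graded `ℂ`-algebra `A` containing `R` in degree `0`, with elements
`t₊` of degree `1` and `t₋` of degree `-1` satisfying the GWA relations, such that each
homogeneous component `A_n` is free of rank one as a left `R`-module with basis
`t₊^n` (for `n ≥ 0`) resp. `t₋^{-n}` (for `n ≤ 0`). -/
structure GWA (R : Type) [CommRing R] [Algebra ℂ R] (σ : R ≃ₐ[ℂ] R) (v : R) : Type 1 where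
  A : Type
  [ringA : Ring A]
  [algA : Algebra ℂ A]
  emb : R →ₐ[ℂ] A
  tp : A
  tm : A
  rel1 : ∀ r : R, emb r * tp = tp * emb (σ r)
  rel2 : ∀ r : R, emb (σ r) * tm = tm * emb r
  rel3 : tm * tp = emb (σ v)
  rel4 : tp * tm = emb v
  deg : ℤ → AddSubgroup A
  algmap_mem : ∀ c : ℂ, algebraMap ℂ A c ∈ deg 0
  emb_mem : ∀ r : R, emb r ∈ deg 0
  tp_mem : tp ∈ deg 1
  tm_mem : tm ∈ deg (-1)
  mul_mem : ∀ {i j : ℤ} {a b : A}, a ∈ deg i → b ∈ deg j → a * b ∈ deg (i + j)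
  decomp : ∀ a : A, ∃ (s : Finset ℤ) (g : ℤ → A), (∀ i, g i ∈ deg i) ∧ a = ∑ i ∈ s, g i
  indep : ∀ (s : Finset ℤ) (g : ℤ → A), (∀ i, g i ∈ deg i) → (∑ i ∈ s, g i) = 0 →
    ∀ i ∈ s, g i = 0
  free_pos : ∀ n : ℕ, ∀ a ∈ deg (n : ℤ), ∃! r : R, a = emb r * tp ^ n
  free_neg : ∀ n : ℕ, ∀ a ∈ deg (-(n : ℤ)), ∃! r : R, a = emb r * tm ^ n

attribute [instance] GWA.ringA GWA.algA

variable {R : Type} [CommRing R] [Algebra ℂ R] {σ : R ≃ₐ[ℂ] R} {v : R}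

/-- A `ℤ`-graded left module over (a realization of) a generalized Weyl algebra. -/
structure GradedMod (G : GWA R σ v) : Type 1 where
  M : Type
  [acg : AddCommGroup M]
  [mod : Module G.A M]
  deg : ℤ → AddSubgroup M
  smul_mem : ∀ {i j : ℤ} {a : G.A} {m : M}, a ∈ G.deg i → m ∈ deg j → a • m ∈ deg (i + j)
  decomp : ∀ m : M, ∃ (s : Finset ℤ) (g : ℤ → M), (∀ i, g i ∈ deg i) ∧ m = ∑ i ∈ s, g i
  indep : ∀ (s : Finset ℤ) (g : ℤ → M), (∀ i, g i ∈ deg i) → (∑ i ∈ s, g i) = 0 →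
    ∀ i ∈ s, g i = 0

attribute [instance] GradedMod.acg GradedMod.mod

variable {G : GWA R σ v}

/-- A homomorphism of graded modules that shifts degrees by `n`, i.e. an element of
`Hom_gr(X, Y[n])`. -/
structure GHom (X Y : GradedMod G) (n : ℤ) : Type where
  toLin : X.M →ₗ[G.A] Y.M
  map_deg : ∀ i : ℤ, ∀ m ∈ X.deg i, toLin m ∈ Y.deg (i + n)

/-- `X` is isomorphic to `Y[n]` as a graded module. -/
def GIso (X Y : GradedMod G) (n : ℤ) : Prop :=
  ∃ f : GHom X Y n, Function.Bijective f.toLin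

/-- A submodule is graded if every element of it is a sum of homogeneous elements of it. -/
def IsGradedSub (X : GradedMod G) (N : Submodule G.A X.M) : Prop :=
  ∀ m ∈ N, ∃ (s : Finset ℤ) (g : ℤ → X.M),
    (∀ i, g i ∈ X.deg i) ∧ (∀ i, g i ∈ N) ∧ m = ∑ i ∈ s, g i

/-- `χ_λ = {k ∈ ℤ : σ^k(v) ∈ λ}`. -/
def chiSet (σ : R ≃ₐ[ℂ] R) (v : R) (lam : Ideal R) : Set ℤ := {k : ℤ | (σ ^ k) v ∈ lam}

/-- `X` is (a realization of) the graded module `A^λ = A/Aλ`: it is cyclic, generated by a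
degree-zero element whose annihilator is the left ideal generated by `λ`. -/
def IsStdMod (G : GWA R σ v) (lam : Ideal R) (X : GradedMod G) : Prop :=
  ∃ x ∈ X.deg 0, Submodule.span G.A {x} = ⊤ ∧
    ∀ a : G.A, a • x = 0 ↔ a ∈ Submodule.span G.A (G.emb '' (lam : Set R))

/-- A graded module is simple if it is nonzero and has no proper nontrivial graded submodules. -/
def IsSimpleGr (X : GradedMod G) : Prop :=
  (∃ m : X.M, m ≠ 0) ∧ ∀ N : Submodule G.A X.M, IsGradedSub X N → N = ⊥ ∨ N = ⊤

/-- Artinian graded module : the descending chain condition on graded submodules. -/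
def IsArtinianGr (X : GradedMod G) : Prop :=
  ∀ f : ℕ → Submodule G.A X.M, (∀ n, IsGradedSub X (f n)) →
    (∀ n, f (n + 1) ≤ f n) → ∃ n, ∀ m, n ≤ m → f m = f n

/-- `Y` is a graded subquotient of `X`. -/
def IsSubquotient (X Y : GradedMod G) : Prop :=
  ∃ (Q P : Submodule G.A X.M), IsGradedSub X Q ∧ IsGradedSub X P ∧ P ≤ Q ∧
    ∃ φ : Q →ₗ[G.A] Y.M, Function.Surjective φ ∧
      (∀ q : Q, φ q = 0 ↔ (q : X.M) ∈ P) ∧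
      (∀ (i : ℤ) (q : Q), (q : X.M) ∈ X.deg i → φ q ∈ Y.deg i)


/-!
Pick finitely many homogeneous generators `u` of `M`, of degrees `e u ∈ [a, b]`. Since
`A_k = R t^k`, each `M_n` is generated over `R` by the elements `t^(n - e u) u`. It is also
Artinian over `R`: an `R`-submodule `U ⊆ M_n` is the degree-`n` part of the graded submodule
`A U`. As `R` is Noetherian, `M_n` has finite length, and its composition factors `R/m` are
finite-dimensional over `ℂ` by Zariski's lemma, so `dim M_n < ∞`. For `n > b` every coefficient
of degree `n - e u ≥ 1` is left divisible by `t₊` (using `r t₊ = t₊ σ(r)`), so `t₊ M_{n-1} = M_n`;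
dually `t₋ M_{n+1} = M_n` for `n < a`. Hence `dim M_n ≤ max_{a ≤ k ≤ b} dim M_k`.
-/

/-- Simple `R`-modules are residue fields `R/m`, finite over `k` by Zariski's lemma. -/
theorem Module.finite_of_isFiniteLength {k R M : Type*} [Field k] [CommRing R] [Algebra k R]
    [Algebra.FiniteType k R] [AddCommGroup M] [Module R M] [Module k M] [IsScalarTower k R M]
    (h : IsFiniteLength R M) : Module.Finite k M := by
  induction h generalizing ‹Module k M› with
  | of_subsingleton => infer_instance
  | @of_simple_quotient M _ _ N _ _ ih =>
    obtain ⟨I, hI, ⟨e⟩⟩ := isSimpleModule_iff_quot_maximal.mp ‹IsSimpleModule R (M ⧸ N)›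
    have : Module.Finite k (R ⧸ I) :=
      letI := Ideal.Quotient.field I
      finite_of_finite_type_of_isJacobsonRing k (R ⧸ I)
    have : Module.Finite k (M ⧸ N) := .equiv (e.restrictScalars k).symm
    have : Module.Finite k (N.restrictScalars k) := ih
    have : Module.Finite k (M ⧸ N.restrictScalars k) :=
      .equiv (Submodule.Quotient.restrictScalarsEquiv k N).symm
    exact .of_submodule_quotient (N.restrictScalars k)

theorem Submodule.finrank_span_le_of_subset_image {K V : Type*} [DivisionRing K] [AddCommGroup V]
    [Module K V] (f : V →ₗ[K] V) {S T : Set V} [FiniteDimensional K (span K T)]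
    (h : S ⊆ f '' T) : Module.finrank K (span K S) ≤ Module.finrank K (span K T) :=
  calc Module.finrank K (span K S)
    _ ≤ Module.finrank K ((span K T).map f) :=
        Submodule.finrank_mono (Submodule.span_image f ▸ Submodule.span_mono h)
    _ ≤ Module.finrank K (span K T) := Submodule.finrank_map_le f _

theorem Int.exists_forall_le_of_le_pred_of_le_succ (f : ℤ → ℕ) (a b : ℤ)
    (hb : ∀ n, b < n → f n ≤ f (n - 1)) (ha : ∀ n, n < a → f n ≤ f (n + 1)) :
    ∃ N : ℕ, ∀ n, f n ≤ N := by
  have hup : ∀ n, b ≤ n → f n ≤ f b := fun n hn => by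
    induction n, hn using Int.leInduction with
    | base => rfl
    | succ n hn ih => exact le_trans (by simpa using hb (n + 1) (by omega)) ih
  have hdown : ∀ n, n ≤ a → f n ≤ f a := fun n hn => by
    induction n, hn using Int.leInductionDown with
    | base => rfl
    | pred n hn ih => exact le_trans (by simpa using ha (n - 1) (by omega)) ih
  refine ⟨(Finset.Icc (min a b) (max a b)).sup f, fun n => ?_⟩
  have hmem : ∀ m, min a b ≤ m → m ≤ max a b → f m ≤ (Finset.Icc (min a b) (max a b)).sup f :=
    fun m h₁ h₂ => Finset.le_sup (Finset.mem_Icc.mpr ⟨h₁, h₂⟩)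
  rcases le_or_gt b n with h | h
  · exact (hup n h).trans (hmem b (min_le_right a b) (le_max_right a b))
  rcases le_or_gt n a with h' | h'
  · exact (hdown n h').trans (hmem a (min_le_left a b) (le_max_left a b))
  · exact hmem n (by omega) (by omega)

namespace GWA

variable (G)

lemma one_mem_deg_zero : (1 : G.A) ∈ G.deg 0 := by
  simpa using G.algmap_mem 1

lemma tp_pow_mem (k : ℕ) : G.tp ^ k ∈ G.deg k := by
  induction k with
  | zero => simpa using G.one_mem_deg_zero
  | succ k ih => rw [pow_succ, Nat.cast_succ]; exact G.mul_mem ih G.tp_mem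

lemma tm_pow_mem (k : ℕ) : G.tm ^ k ∈ G.deg (-k) := by
  induction k with
  | zero => simpa using G.one_mem_deg_zero
  | succ k ih => rw [pow_succ, Nat.cast_succ, neg_add]; exact G.mul_mem ih G.tm_mem

/-- The basis element of `A_k = R t^k`: `t₊^k` for `k ≥ 0` and `t₋^(-k)` for `k < 0`. -/
def tpow (k : ℤ) : G.A := if 0 ≤ k then G.tp ^ k.toNat else G.tm ^ (-k).toNat

lemma tpow_mem (k : ℤ) : G.tpow k ∈ G.deg k := by
  unfold tpow
  split_ifs with hk
  · simpa [Int.toNat_of_nonneg hk] using G.tp_pow_mem k.toNat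
  · simpa [Int.toNat_of_nonneg (by omega : 0 ≤ -k)] using G.tm_pow_mem (-k).toNat

variable {G}

lemma exists_eq_emb_mul_tpow {k : ℤ} {a : G.A} (ha : a ∈ G.deg k) :
    ∃ r : R, a = G.emb r * G.tpow k := by
  unfold tpow
  split_ifs with hk
  · exact (G.free_pos k.toNat a (by rwa [Int.toNat_of_nonneg hk])).exists
  · exact (G.free_neg (-k).toNat a (by rwa [Int.toNat_of_nonneg (by omega), neg_neg])).exists

lemma exists_eq_emb_of_mem_deg_zero {a : G.A} (ha : a ∈ G.deg 0) : ∃ r : R, a = G.emb r := by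
  simpa [tpow] using exists_eq_emb_mul_tpow ha

lemma exists_eq_tp_mul {k : ℤ} (hk : 0 < k) {a : G.A} (ha : a ∈ G.deg k) :
    ∃ b ∈ G.deg (k - 1), a = G.tp * b := by
  obtain ⟨j, rfl⟩ : ∃ j : ℕ, k = j + 1 := ⟨(k - 1).toNat, by omega⟩
  obtain ⟨r, rfl⟩ := (G.free_pos (j + 1) a (by exact_mod_cast ha)).exists
  refine ⟨G.emb (σ r) * G.tp ^ j, by simpa using G.mul_mem (G.emb_mem _) (G.tp_pow_mem j), ?_⟩
  rw [pow_succ', ← mul_assoc, G.rel1, mul_assoc]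

lemma exists_eq_tm_mul {k : ℤ} (hk : k < 0) {a : G.A} (ha : a ∈ G.deg k) :
    ∃ b ∈ G.deg (k + 1), a = G.tm * b := by
  obtain ⟨j, rfl⟩ : ∃ j : ℕ, k = -(j + 1) := ⟨(-(k + 1)).toNat, by omega⟩
  obtain ⟨r, rfl⟩ := (G.free_neg (j + 1) a (by exact_mod_cast ha)).exists
  refine ⟨G.emb (σ.symm r) * G.tm ^ j, ?_, ?_⟩
  · simpa using G.mul_mem (G.emb_mem _) (G.tm_pow_mem j)
  · rw [pow_succ', ← mul_assoc, ← mul_assoc, ← G.rel2, AlgEquiv.apply_symm_apply]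

lemma exists_homogeneous_components (a : G.A) :
    ∃ (s : Finset ℤ) (c : ℤ → G.A), (∀ i, c i ∈ G.deg i) ∧ (∀ i ∉ s, c i = 0) ∧
      a = ∑ i ∈ s, c i := by
  classical
  obtain ⟨s, g, hg, rfl⟩ := G.decomp a
  refine ⟨s, fun i => if i ∈ s then g i else 0, fun i => ?_, fun i hi => if_neg hi, ?_⟩
  · dsimp only
    split_ifs
    exacts [hg i, zero_mem _]
  · exact Finset.sum_congr rfl fun i hi => (if_pos hi).symm

lemma exists_shifted_components {ι : Type*} (J : Finset ι) (e : ι → ℤ) (a : ι → G.A) :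
    ∃ (s : Finset ℤ) (b : ℤ → ι → G.A), (∀ k j, b k j ∈ G.deg (k - e j)) ∧
      ∀ j ∈ J, a j = ∑ k ∈ s, b k j := by
  classical
  choose t c hc hc0 hca using fun j => exists_homogeneous_components (a j)
  refine ⟨J.biUnion fun j => (t j).image (· + e j), fun k j => c j (k - e j),
    fun k j => hc j _, fun j hj => ?_⟩
  rw [← Finset.sum_subset (Finset.subset_biUnion_of_mem (fun j => (t j).image (· + e j)) hj)
    fun k _ hk => hc0 j _ fun hk' => hk (Finset.mem_image.mpr ⟨_, hk', sub_add_cancel k _⟩),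
    Finset.sum_image fun _ _ _ _ h => add_right_cancel h, hca j]
  simp only [add_sub_cancel_right]

end GWA

namespace GradedMod

variable (X : GradedMod G)

lemma eq_ite_of_eq_sum {n : ℤ} {x : X.M} (hx : x ∈ X.deg n) {s : Finset ℤ} {w : ℤ → X.M}
    (hw : ∀ k, w k ∈ X.deg k) (hxw : x = ∑ k ∈ s, w k) : x = if n ∈ s then w n else 0 := by
  classical
  set φ : ℤ → X.M := fun k => (if k ∈ s then w k else 0) - if k = n then x else 0
  have hφ : ∀ k, φ k ∈ X.deg k := fun k => by
    refine sub_mem ?_ ?_ <;> split_ifs with h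
    exacts [hw k, zero_mem _, h ▸ hx, zero_mem _]
  have hsum : ∑ k ∈ insert n s, φ k = 0 := by
    rw [Finset.sum_sub_distrib, Finset.sum_ite_eq', if_pos (Finset.mem_insert_self n s),
      ← Finset.sum_subset (Finset.subset_insert n s) fun k _ hk => if_neg hk,
      Finset.sum_congr rfl fun k hk => if_pos hk, ← hxw, sub_self]
  have := X.indep _ φ hφ hsum n (Finset.mem_insert_self n s)
  simp only [φ] at this
  exact (sub_eq_zero.mp this).symm

lemma exists_coeffs_mem_deg {ι : Type*} (J : Finset ι) (e : ι → ℤ) (u : ι → X.M)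
    (hu : ∀ j ∈ J, u j ∈ X.deg (e j)) (a : ι → G.A) {n : ℤ} {x : X.M} (hx : x ∈ X.deg n)
    (hxa : x = ∑ j ∈ J, a j • u j) :
    ∃ b : ι → G.A, (∀ j, b j ∈ G.deg (n - e j)) ∧ x = ∑ j ∈ J, b j • u j := by
  obtain ⟨s, b, hb, hab⟩ := GWA.exists_shifted_components J e a
  have hw : ∀ k, ∑ j ∈ J, b k j • u j ∈ X.deg k := fun k =>
    AddSubgroup.sum_mem _ fun j hj => by simpa using X.smul_mem (hb k j) (hu j hj)
  have hxw : x = ∑ k ∈ s, ∑ j ∈ J, b k j • u j := by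
    rw [Finset.sum_comm, hxa]
    exact Finset.sum_congr rfl fun j hj => by rw [hab j hj, Finset.sum_smul]
  rw [X.eq_ite_of_eq_sum hx hw hxw]
  split_ifs
  · exact ⟨b n, hb n, rfl⟩
  · exact ⟨0, fun _ => zero_mem _, by simp⟩

lemma isGradedSub_span {n : ℤ} {U : Set X.M} (hU : U ⊆ X.deg n) :
    IsGradedSub X (Submodule.span G.A U) := by
  intro m hm
  obtain ⟨p, a, u, rfl⟩ := Submodule.mem_span_set'.mp hm
  obtain ⟨s, b, hb, hab⟩ := GWA.exists_shifted_components Finset.univ (fun _ => n) a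
  refine ⟨s, fun k => ∑ j, b k j • (u j : X.M), fun k => ?_, fun k => ?_, ?_⟩
  · exact AddSubgroup.sum_mem _ fun j _ => by simpa using X.smul_mem (hb k j) (hU (u j).2)
  · exact Submodule.sum_mem _ fun j _ => Submodule.smul_mem _ _ (Submodule.subset_span (u j).2)
  · rw [Finset.sum_comm]
    exact Finset.sum_congr rfl fun j hj => by rw [hab j hj, Finset.sum_smul]

instance : Module R X.M := Module.compHom X.M G.emb.toRingHom

lemma smul_def (r : R) (m : X.M) : r • m = G.emb r • m := rfl

def component (n : ℤ) : Submodule R X.M where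
  carrier := X.deg n
  add_mem' := add_mem
  zero_mem' := zero_mem _
  smul_mem' r m hm := by simpa [smul_def] using X.smul_mem (G.emb_mem r) hm

@[simp]
lemma mem_component {n : ℤ} {x : X.M} : x ∈ X.component n ↔ x ∈ X.deg n := Iff.rfl

lemma mem_of_mem_span_of_mem_deg {n : ℤ} {U : Submodule R X.M} (hU : (U : Set X.M) ⊆ X.deg n)
    {x : X.M} (hx : x ∈ X.deg n) (hxU : x ∈ Submodule.span G.A (U : Set X.M)) : x ∈ U := by
  obtain ⟨p, a, u, hxa⟩ := Submodule.mem_span_set'.mp hxU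
  obtain ⟨b, hb, rfl⟩ := X.exists_coeffs_mem_deg Finset.univ (fun _ => n) (fun j => u j)
    (fun j _ => hU (u j).2) a hx hxa.symm
  refine U.sum_mem fun j _ => ?_
  obtain ⟨r, hr⟩ := GWA.exists_eq_emb_of_mem_deg_zero (by simpa using hb j)
  rw [hr, ← smul_def]
  exact U.smul_mem r (u j).2

lemma eq_of_span_eq {n : ℤ} {U V : Submodule R X.M} (hU : (U : Set X.M) ⊆ X.deg n)
    (hV : (V : Set X.M) ⊆ X.deg n)
    (h : Submodule.span G.A (U : Set X.M) = Submodule.span G.A (V : Set X.M)) : U = V :=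
  le_antisymm
    (fun _ hx => X.mem_of_mem_span_of_mem_deg hV (hU hx) (h ▸ Submodule.subset_span hx))
    (fun _ hx => X.mem_of_mem_span_of_mem_deg hU (hV hx) (h ▸ Submodule.subset_span hx))

/-- An `R`-submodule `U` of `M_n` is recovered from the graded submodule `A U` as its degree-`n`
part, so the DCC on graded submodules yields the DCC on `R`-submodules of `M_n`. -/
lemma isArtinian_component (hart : IsArtinianGr X) (n : ℤ) : IsArtinian R (X.component n) := by
  rw [← monotone_stabilizes_iff_artinian]
  intro f
  set U : ℕ → Submodule R X.M := fun j => (OrderDual.ofDual (f j)).map (X.component n).subtype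
  have hU : ∀ j, (U j : Set X.M) ⊆ X.deg n := fun j => by
    rintro _ ⟨y, -, rfl⟩
    exact y.2
  obtain ⟨N, hN⟩ := hart (fun j => Submodule.span G.A (U j : Set X.M))
    (fun j => X.isGradedSub_span (hU j))
    (fun j => Submodule.span_mono (Submodule.map_mono (f.monotone j.le_succ)))
  refine ⟨N, fun m hm => congrArg OrderDual.toDual <|
    Submodule.map_injective_of_injective (X.component n).injective_subtype ?_⟩
  exact X.eq_of_span_eq (hU N) (hU m) (hN m hm).symm

lemma exists_homogeneous_generators (hfg : (⊤ : Submodule G.A X.M).FG) :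
    ∃ (P : Finset X.M) (e : X.M → ℤ), (∀ u ∈ P, u ∈ X.deg (e u)) ∧
      Submodule.span G.A (P : Set X.M) = ⊤ := by
  classical
  obtain ⟨S, hS⟩ := hfg
  choose t g hg hgsum using X.decomp
  let e : X.M → ℤ := fun u => Classical.epsilon fun i => u ∈ X.deg i
  have he : ∀ i u, u ∈ X.deg i → u ∈ X.deg (e u) := fun i u hu =>
    Classical.epsilon_spec (p := fun i => u ∈ X.deg i) ⟨i, hu⟩
  refine ⟨S.biUnion fun m => (t m).image (g m), e, fun u hu => ?_, eq_top_iff.mpr ?_⟩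
  · obtain ⟨m, -, hu⟩ := Finset.mem_biUnion.mp hu
    obtain ⟨i, -, rfl⟩ := Finset.mem_image.mp hu
    exact he i _ (hg m i)
  · rw [← hS, Submodule.span_le]
    intro m hm
    rw [SetLike.mem_coe, hgsum m]
    exact Submodule.sum_mem _ fun i hi => Submodule.subset_span <|
      Finset.mem_biUnion.mpr ⟨m, hm, Finset.mem_image_of_mem _ hi⟩

section Generators

variable {X} {P : Finset X.M} {e : X.M → ℤ}

lemma exists_eq_sum_smul_of_mem_deg (hPe : ∀ u ∈ P, u ∈ X.deg (e u))
    (hP : Submodule.span G.A (P : Set X.M) = ⊤) {n : ℤ} {x : X.M} (hx : x ∈ X.deg n) :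
    ∃ b : X.M → G.A, (∀ u, b u ∈ G.deg (n - e u)) ∧ x = ∑ u ∈ P, b u • u := by
  obtain ⟨a, -, hxa⟩ := Submodule.mem_span_finset.mp (hP ▸ Submodule.mem_top : x ∈ _)
  exact X.exists_coeffs_mem_deg P e id hPe a hx hxa.symm

lemma component_fg (hPe : ∀ u ∈ P, u ∈ X.deg (e u))
    (hP : Submodule.span G.A (P : Set X.M) = ⊤) (n : ℤ) : (X.component n).FG := by
  classical
  refine ⟨P.image fun u => G.tpow (n - e u) • u, le_antisymm ?_ fun x hx => ?_⟩
  · rw [Submodule.span_le]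
    intro y hy
    obtain ⟨u, hu, rfl⟩ := Finset.mem_image.mp hy
    simpa using X.smul_mem (G.tpow_mem (n - e u)) (hPe u hu)
  · obtain ⟨b, hb, rfl⟩ := exists_eq_sum_smul_of_mem_deg hPe hP hx
    refine Submodule.sum_mem _ fun u hu => ?_
    obtain ⟨r, hr⟩ := GWA.exists_eq_emb_mul_tpow (hb u)
    rw [hr, mul_smul, ← smul_def]
    exact Submodule.smul_mem _ r (Submodule.subset_span (Finset.mem_image_of_mem _ hu))

lemma deg_subset_image_tp_smul (hPe : ∀ u ∈ P, u ∈ X.deg (e u))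
    (hP : Submodule.span G.A (P : Set X.M) = ⊤) {n : ℤ} (hn : ∀ u ∈ P, e u < n) :
    (X.deg n : Set X.M) ⊆ (G.tp • ·) '' X.deg (n - 1) := by
  intro x hx
  obtain ⟨b, hb, rfl⟩ := exists_eq_sum_smul_of_mem_deg hPe hP hx
  choose! c hc hbc using fun u (hu : u ∈ P) => GWA.exists_eq_tp_mul (by linarith [hn u hu]) (hb u)
  refine ⟨∑ u ∈ P, c u • u, AddSubgroup.sum_mem _ fun u hu => ?_, ?_⟩
  · convert X.smul_mem (hc u hu) (hPe u hu) using 2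
    ring
  · refine (Finset.smul_sum ..).trans (Finset.sum_congr rfl fun u hu => ?_)
    rw [hbc u hu, mul_smul]

lemma deg_subset_image_tm_smul (hPe : ∀ u ∈ P, u ∈ X.deg (e u))
    (hP : Submodule.span G.A (P : Set X.M) = ⊤) {n : ℤ} (hn : ∀ u ∈ P, n < e u) :
    (X.deg n : Set X.M) ⊆ (G.tm • ·) '' X.deg (n + 1) := by
  intro x hx
  obtain ⟨b, hb, rfl⟩ := exists_eq_sum_smul_of_mem_deg hPe hP hx
  choose! c hc hbc using fun u (hu : u ∈ P) => GWA.exists_eq_tm_mul (by linarith [hn u hu]) (hb u)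
  refine ⟨∑ u ∈ P, c u • u, AddSubgroup.sum_mem _ fun u hu => ?_, ?_⟩
  · convert X.smul_mem (hc u hu) (hPe u hu) using 2
    ring
  · refine (Finset.smul_sum ..).trans (Finset.sum_congr rfl fun u hu => ?_)
    rw [hbc u hu, mul_smul]

end Generators

instance [Module ℂ X.M] [IsScalarTower ℂ G.A X.M] : IsScalarTower ℂ R X.M where
  smul_assoc c r m := by rw [smul_def, smul_def, map_smul, smul_assoc]

lemma finiteDimensional_span_deg [Module ℂ X.M] [IsScalarTower ℂ G.A X.M]
    [Algebra.FiniteType ℂ R] (hart : IsArtinianGr X) {n : ℤ} (hfg : (X.component n).FG) :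
    FiniteDimensional ℂ (Submodule.span ℂ (X.deg n : Set X.M)) := by
  have : IsNoetherianRing R := Algebra.FiniteType.isNoetherianRing ℂ R
  have : IsNoetherian R (X.component n) := isNoetherian_of_fg_of_noetherian _ hfg
  have := X.isArtinian_component hart n
  have : Module.Finite ℂ (X.component n) := Module.finite_of_isFiniteLength
    (isFiniteLength_iff_isNoetherian_isArtinian.mpr ⟨‹_›, ‹_›⟩)
  have hspan : Submodule.span ℂ (X.deg n : Set X.M) = (X.component n).restrictScalars ℂ :=
    Submodule.span_eq ((X.component n).restrictScalars ℂ)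
  rw [hspan]
  exact .equiv ((Submodule.restrictScalarsEquiv ℂ R X.M (X.component n)).restrictScalars ℂ).symm

end GradedMod

/-- A finitely generated Artinian graded `A`-module has uniformly bounded
homogeneous components: `dim_ℂ M_n ≤ N` for all `n`.  (Here `X.M` is regarded as a
`ℂ`-vector space compatibly with the `ℂ`-algebra structure of `A`, and the dimension of the
component `M_n` is the rank of its `ℂ`-linear span, which coincides with `M_n` itself.) -/
theorem stmt6 {R : Type} [CommRing R] [Algebra ℂ R] (hfg : Algebra.FiniteType ℂ R)
    {σ : R ≃ₐ[ℂ] R} {v : R} (G : GWA R σ v)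
    (X : GradedMod G) [Module ℂ X.M]
    (hsc : ∀ (c : ℂ) (m : X.M), c • m = algebraMap ℂ G.A c • m)
    (hfgX : (⊤ : Submodule G.A X.M).FG) (hart : IsArtinianGr X) :
    ∃ N : ℕ, ∀ n : ℤ,
      Module.rank ℂ ↥(Submodule.span ℂ ((X.deg n : Set X.M))) ≤ (N : Cardinal) := by
  have : IsScalarTower ℂ G.A X.M := .of_algebraMap_smul fun c m => (hsc c m).symm
  obtain ⟨P, e, hPe, hP⟩ := X.exists_homogeneous_generators hfgX
  obtain ⟨a, ha⟩ := (P.image e).bddBelow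
  obtain ⟨b, hb⟩ := (P.image e).bddAbove
  have hfin (n : ℤ) : FiniteDimensional ℂ (Submodule.span ℂ (X.deg n : Set X.M)) :=
    X.finiteDimensional_span_deg hart (GradedMod.component_fg hPe hP n)
  have hup (n : ℤ) (hn : b < n) : Module.finrank ℂ (Submodule.span ℂ (X.deg n : Set X.M)) ≤
      Module.finrank ℂ (Submodule.span ℂ (X.deg (n - 1) : Set X.M)) :=
    Submodule.finrank_span_le_of_subset_image (DistribSMul.toLinearMap ℂ X.M G.tp) <|
      GradedMod.deg_subset_image_tp_smul hPe hP fun u hu =>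
        (hb (Finset.mem_image_of_mem e hu)).trans_lt hn
  have hdown (n : ℤ) (hn : n < a) : Module.finrank ℂ (Submodule.span ℂ (X.deg n : Set X.M)) ≤
      Module.finrank ℂ (Submodule.span ℂ (X.deg (n + 1) : Set X.M)) :=
    Submodule.finrank_span_le_of_subset_image (DistribSMul.toLinearMap ℂ X.M G.tm) <|
      GradedMod.deg_subset_image_tm_smul hPe hP fun u hu =>
        hn.trans_le (ha (Finset.mem_image_of_mem e hu))
  obtain ⟨N, hN⟩ := Int.exists_forall_le_of_le_pred_of_le_succ _ a b hup hdown
  exact ⟨N, fun n => (Module.finrank_eq_rank ℂ _).symm.trans_le (Nat.cast_le.mpr (hN n))⟩
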